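/- arXiv:1401.4092 — 3 statements merged into one kernel-verified Lean document; each statement's English description precedes it below -/
import Mathlib

section
/- Differential privacy of the monotonic-valuations mechanism (used in the proof of Theorem 4.2). Fix B > 0, ε > 0 and n ≥ 1, and let M_{B,ε} be the monotonic-valuations mechanism. Then for every player i, M_{-i} is ε-differentially private for i-neighbors: for all i-neighbors (b,v),(b',v') and every outcome (s, p_{-i}) ∈ ℤ × ℝ^{n-1}, Pr[M_{-i}(b,v) = (s,p_{-i})] ≤ e^ε · Pr[M_{-i}(b',v') = (s,p_{-i})]. -/
open MeasureTheory
open scoped ENNReal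

noncomputable section

attribute [local instance] Classical.propDecidable

/-- Expectation of a real-valued function under a `PMF`. -/
def PMF.expect {α : Type*} [MeasurableSpace α] (p : PMF α) (f : α → ℝ) : ℝ :=
  ∫ x, f x ∂p.toMeasure

/-- Total variation (statistical) distance between two distributions:
`Δ(p,q) = sup_S |p(S) - q(S)|`. -/
def tvDist {α : Type*} (p q : PMF α) : ℝ :=
  ⨆ S : Set α, |(p.toOuterMeasure S).toReal - (q.toOuterMeasure S).toReal|

/-- A mechanism on `n` players: a randomized function producing an integer output
(an estimate of the sum of the data bits) together with payments to the `n` players. -/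
structure Mech (n : ℕ) where
  run : (Fin n → Bool) → (Fin n → ℝ) → PMF (ℤ × (Fin n → ℝ))

namespace Mech

variable {n : ℕ}

/-- The output part `M_out`. -/
def out (M : Mech n) (b : Fin n → Bool) (v : Fin n → ℝ) : PMF ℤ :=
  (M.run b v).map Prod.fst

/-- The payment part `M_pay`. -/
def payPMF (M : Mech n) (b : Fin n → Bool) (v : Fin n → ℝ) : PMF (Fin n → ℝ) :=
  (M.run b v).map Prod.snd

/-- `Pay_i(b,v)`: the expected payment to player `i`. -/
def pay (M : Mech n) (b : Fin n → Bool) (v : Fin n → ℝ) (i : Fin n) : ℝ :=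
  (M.payPMF b v).expect (fun p => p i)

/-- `M_{-i}`: the output together with the payments to all players other than `i`. -/
def minus (M : Mech n) (i : Fin n) (b : Fin n → Bool) (v : Fin n → ℝ) :
    PMF (ℤ × ({j : Fin n // j ≠ i} → ℝ)) :=
  (M.run b v).map (fun sp => (sp.1, fun j => sp.2 j.1))

end Mech

/-- The type of privacy loss functions `λ_i(b, v, v'_i, s, p_{-i})` for player `i`. -/
abbrev LossFn (n : ℕ) (i : Fin n) : Type :=
  (Fin n → Bool) → (Fin n → ℝ) → ℝ → ℤ → ({j : Fin n // j ≠ i} → ℝ) → ℝ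

/-- `Loss_i(b, v, v'_i)`: the expected privacy loss of player `i` with true types `(b,v)`
and declaration `v'_i`. -/
def lossOf {n : ℕ} (M : Mech n) {i : Fin n} (lam : LossFn n i)
    (b : Fin n → Bool) (v : Fin n → ℝ) (v'i : ℝ) : ℝ :=
  (M.run b (Function.update v i v'i)).expect
    (fun sp => lam b v v'i sp.1 (fun j => sp.2 j.1))

/-- `i`-neighbors: inputs agreeing in all coordinates `j ≠ i`. -/
def iNeighbor {n : ℕ} (i : Fin n) (x y : (Fin n → Bool) × (Fin n → ℝ)) : Prop :=
  ∀ j, j ≠ i → x.1 j = y.1 j ∧ x.2 j = y.2 j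

/-- Neighbors: `i`-neighbors for some `i`. -/
def Neighbor {n : ℕ} (x y : (Fin n → Bool) × (Fin n → ℝ)) : Prop :=
  ∃ i, iNeighbor i x y

/-- Monotonically related player types. -/
def monRelated (t t' : Bool × ℝ) : Prop :=
  (t.1 = false ∧ t'.1 = true ∧ t.2 ≤ t'.2) ∨ (t.1 = true ∧ t'.1 = false ∧ t'.2 ≤ t.2)

/-- Monotonic `i`-neighbors. -/
def monINeighbor {n : ℕ} (i : Fin n) (x y : (Fin n → Bool) × (Fin n → ℝ)) : Prop :=
  iNeighbor i x y ∧ monRelated (x.1 i, x.2 i) (y.1 i, y.2 i)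

/-- `(b,v)` is `δ`-distinguishable for player `i` with respect to `f`. -/
def distinguishable {n : ℕ} {α : Type*} (δ : ℝ)
    (f : (Fin n → Bool) → (Fin n → ℝ) → PMF α) (i : Fin n)
    (b : Fin n → Bool) (v : Fin n → ℝ) : Prop :=
  ∃ y : (Fin n → Bool) × (Fin n → ℝ), iNeighbor i (b, v) y ∧ δ ≤ tvDist (f b v) (f y.1 y.2)

/-- `(b,v)` is `δ`-monotonically distinguishable for player `i` with respect to `f`. -/
def monDistinguishable {n : ℕ} {α : Type*} (δ : ℝ)
    (f : (Fin n → Bool) → (Fin n → ℝ) → PMF α) (i : Fin n)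
    (b : Fin n → Bool) (v : Fin n → ℝ) : Prop :=
  ∃ y : (Fin n → Bool) × (Fin n → ℝ), monINeighbor i (b, v) y ∧ δ ≤ tvDist (f b v) (f y.1 y.2)

/-- `λ_i` respects indifference. -/
def respectsIndifference {n : ℕ} (M : Mech n) {i : Fin n} (lam : LossFn n i) : Prop :=
  ∀ b v, v i = 0 → ∀ v' v'', lossOf M lam b v v' = lossOf M lam b v v''

/-- `λ_i` is increasing for `δ`-distinguishability. -/
def increasingFor {n : ℕ} (M : Mech n) {i : Fin n} (lam : LossFn n i) (δ : ℝ) : Prop :=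
  ∃ T : ℝ → (Fin n → Bool) → ({j : Fin n // j ≠ i} → ℝ) → ℝ,
    ∀ ℓ, 0 < ℓ → ∀ (b : Fin n → Bool) (v : Fin n → ℝ),
      T ℓ b (fun j => v j.1) ≤ v i →
      distinguishable δ M.out i b v →
      ℓ < lossOf M lam b v (v i)

/-- `λ_i` is increasing for `δ`-monotonic distinguishability. -/
def increasingForMon {n : ℕ} (M : Mech n) {i : Fin n} (lam : LossFn n i) (δ : ℝ) : Prop :=
  ∃ T : ℝ → (Fin n → Bool) → ({j : Fin n // j ≠ i} → ℝ) → ℝ,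
    ∀ ℓ, 0 < ℓ → ∀ (b : Fin n → Bool) (v : Fin n → ℝ),
      T ℓ b (fun j => v j.1) ≤ v i →
      monDistinguishable δ M.out i b v →
      ℓ < lossOf M lam b v (v i)

/-- `M` is individually rational. -/
def indivRational {n : ℕ} (M : Mech n) (lam : ∀ i : Fin n, LossFn n i) : Prop :=
  ∀ b v i, lossOf M (lam i) b v (v i) ≤ M.pay b v i

/-- `M` is truthful for input `(b,v)` and player `i`. -/
def truthfulAt {n : ℕ} (M : Mech n) {i : Fin n} (lam : LossFn n i)
    (b : Fin n → Bool) (v : Fin n → ℝ) : Prop :=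
  ∀ v'i : ℝ,
    M.pay b (Function.update v i v'i) i - lossOf M lam b v v'i ≤
      M.pay b v i - lossOf M lam b v (v i)

/-- The average `b̄` of the data bits. -/
def bbar {n : ℕ} (b : Fin n → Bool) : ℝ := (∑ i, if b i then (1 : ℝ) else 0) / n

/-- `M` is `([a, a'], β)`-accurate on input `(b,v)`. -/
def accurate {n : ℕ} (M : Mech n) (a a' β : ℝ) (b : Fin n → Bool) (v : Fin n → ℝ) : Prop :=
  ((M.out b v).toOuterMeasure
      {s : ℤ | ¬((bbar b - a) * n < (s : ℝ) ∧ (s : ℝ) < (bbar b + a') * n)}).toReal ≤ β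

/-- `G` is the symmetric geometric distribution `Geom(ε)` on `ℤ`, with
`Pr[X = k] = (1-e^{-ε})/(1+e^{-ε}) · e^{-ε|k|}`. -/
def isGeom (ε : ℝ) (G : PMF ℤ) : Prop :=
  ∀ k : ℤ, G k =
    ENNReal.ofReal ((1 - Real.exp (-ε)) / (1 + Real.exp (-ε)) * Real.exp (-ε * |(k : ℝ)|))

/-- The monotonic-valuations mechanism `M_{B,ε}` (Algorithm 1): data bits of players with
`2εv_i > B/n` are treated as 0, the output is the resulting sum plus `Geom(ε)` noise, and
each player with `2εv_i ≤ B/n` is paid `B/n` (others are paid nothing). -/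
def monMech (n : ℕ) (B ε : ℝ) (G : PMF ℤ) : Mech n where
  run b v := G.map (fun x =>
    ((∑ i, if b i = true ∧ 2 * ε * v i ≤ B / n then (1 : ℤ) else 0) + x,
      fun i => if 2 * ε * v i ≤ B / n then B / n else 0))

/-- The modified mechanism `M'` of Theorem 4.3: identical to `M_{B,ε}` except that all
players with data bit 0 are paid `B/n`, even those with large privacy valuations. -/
def monMech' (n : ℕ) (B ε : ℝ) (G : PMF ℤ) : Mech n where
  run b v := G.map (fun x =>
    ((∑ i, if b i = true ∧ 2 * ε * v i ≤ B / n then (1 : ℤ) else 0) + x,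
      fun i => if 2 * ε * v i ≤ B / n ∨ b i = false then B / n else 0))

/-- The log-ratio of point probabilities of `M_{-i}` between `(b,v)` and the input where
player `i`'s type is replaced by `(b''_i, v''_i)`. -/
def logRatio {n : ℕ} (M : Mech n) (i : Fin n) (b : Fin n → Bool) (v : Fin n → ℝ)
    (b''i : Bool) (v''i : ℝ) (s : ℤ) (p : {j : Fin n // j ≠ i} → ℝ) : ℝ :=
  Real.log ((M.minus i b v (s, p)).toReal /
    (M.minus i (Function.update b i b''i) (Function.update v i v''i) (s, p)).toReal)

/-- `λ_i` is bounded by differential privacy for monotonic valuations. -/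
def boundedByDPMon {n : ℕ} (M : Mech n) {i : Fin n} (lam : LossFn n i) : Prop :=
  ∀ b v v'i s p,
    |lam b v v'i s p| ≤
      v i * ⨆ t : {t : Bool × ℝ // monRelated (b i, v i) t},
        logRatio M i b v t.1.1 t.1.2 s p

/-- `λ_i` respects identical output distributions. -/
def respectsIdentical {n : ℕ} (M : Mech n) {i : Fin n} (lam : LossFn n i) : Prop :=
  ∀ b v v'i, M.minus i b v = M.minus i b (Function.update v i v'i) →
    ∀ s p, lam b v v'i s p = lam b v (v i) s p

/-- `λ_i` is growing with statistical distance for monotonic neighbors. -/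
def growingMon {n : ℕ} (M : Mech n) {i : Fin n} (lam : LossFn n i) : Prop :=
  ∀ b v y, monINeighbor i (b, v) y →
    v i * tvDist (M.out b v) (M.out y.1 y.2) ≤ lossOf M lam b v (v i)

/-
A player's report moves the thresholded count `∑ b'_j` by at most one, and leaves every other
player's payment unchanged, since player `j`'s payment depends only on `v_j`. The output of
`M_{-i}` is therefore the count shifted by `Geom(ε)` noise, paired with a deterministic payment
vector common to both inputs; shifting `Geom(ε)` by one changes each point probability by a
factor at most `e^ε`.
-/

theorem PMF.map_add_left_prod_mk_apply {α β : Type*} [AddGroup α] (G : PMF α) (c : α) (q : β)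
    (s : α) (p : β) :
    (G.map fun x => (c + x, q)) (s, p) = if p = q then G (-c + s) else 0 := by
  rw [PMF.map_apply]
  split_ifs with hp
  · refine (tsum_eq_single (-c + s) fun x hx => if_neg ?_).trans (if_pos ?_)
    · exact fun h => hx (eq_neg_add_of_add_eq (Prod.ext_iff.mp h).1.symm)
    · rw [hp, add_neg_cancel_left]
  · exact ENNReal.tsum_eq_zero.mpr fun x => if_neg fun h => hp (Prod.ext_iff.mp h).2

theorem isGeom.apply_le_exp_mul {ε : ℝ} {G : PMF ℤ} (hG : isGeom ε G) (hε : 0 ≤ ε)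
    {k k' d : ℤ} (hd : |k - k'| ≤ d) :
    G k ≤ ENNReal.ofReal (Real.exp (ε * d)) * G k' := by
  rw [hG k, hG k', ← ENNReal.ofReal_mul (Real.exp_nonneg _)]
  refine ENNReal.ofReal_le_ofReal ?_
  have hc : 0 ≤ (1 - Real.exp (-ε)) / (1 + Real.exp (-ε)) := by
    have : Real.exp (-ε) ≤ 1 := Real.exp_le_one_iff.mpr (neg_nonpos.mpr hε)
    exact div_nonneg (by linarith) (by positivity)
  have htriangle : |(k' : ℝ)| - |(k : ℝ)| ≤ d := by
    have hd' : |(k : ℝ) - k'| ≤ d := by exact_mod_cast hd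
    linarith [abs_sub_comm (k : ℝ) k', abs_sub_abs_le_abs_sub (k' : ℝ) k]
  calc _ ≤ (1 - Real.exp (-ε)) / (1 + Real.exp (-ε)) * Real.exp (ε * d + -ε * |(k' : ℝ)|) := by
        gcongr
        nlinarith
    _ = _ := by rw [Real.exp_add]; ring

theorem abs_sum_boole_sub_sum_boole_le_one {ι : Type*} [Fintype ι] {P Q : ι → Prop}
    [DecidablePred P] [DecidablePred Q] (i : ι) (h : ∀ j, j ≠ i → (P j ↔ Q j)) :
    |∑ j, (if P j then 1 else 0 : ℤ) - ∑ j, if Q j then 1 else 0| ≤ 1 := by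
  rw [← Finset.sum_sub_distrib,
    Fintype.sum_eq_single i fun j hj => by simp only [h j hj, sub_self]]
  split_ifs <;> norm_num

theorem monMech_minus_eq_map (n : ℕ) (B ε : ℝ) (G : PMF ℤ) (i : Fin n)
    (b : Fin n → Bool) (v : Fin n → ℝ) :
    (monMech n B ε G).minus i b v = G.map fun x =>
      ((∑ j, if b j = true ∧ 2 * ε * v j ≤ B / n then 1 else 0) + x,
        fun j : {j : Fin n // j ≠ i} => if 2 * ε * v j ≤ B / n then B / n else 0) := by
  simp only [Mech.minus, monMech, PMF.map_comp]
  rfl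

theorem monMech_minus_dp_general (n : ℕ) (B ε : ℝ) (hε : 0 < ε)
    (G : PMF ℤ) (hG : isGeom ε G) (i : Fin n)
    (x y : (Fin n → Bool) × (Fin n → ℝ)) (hxy : iNeighbor i x y)
    (sp : ℤ × ({j : Fin n // j ≠ i} → ℝ)) :
    (monMech n B ε G).minus i x.1 x.2 sp ≤
      ENNReal.ofReal (Real.exp ε) * (monMech n B ε G).minus i y.1 y.2 sp := by
  obtain ⟨s, p⟩ := sp
  simp only [monMech_minus_eq_map, PMF.map_add_left_prod_mk_apply]
  have hpay : (fun j : {j : Fin n // j ≠ i} => if 2 * ε * x.2 j ≤ B / n then B / n else 0) =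
      fun j : {j : Fin n // j ≠ i} => if 2 * ε * y.2 j ≤ B / n then B / n else 0 :=
    funext fun j => by rw [(hxy j j.2).2]
  have hcount := abs_sum_boole_sub_sum_boole_le_one
    (P := fun j => y.1 j = true ∧ 2 * ε * y.2 j ≤ B / n)
    (Q := fun j => x.1 j = true ∧ 2 * ε * x.2 j ≤ B / n) i
    fun j hj => by rw [(hxy j hj).1, (hxy j hj).2]
  rw [hpay]
  split_ifs
  · convert hG.apply_le_exp_mul hε.le (d := 1) ?_ using 4
    · simp
    · convert hcount using 2
      ring
  · simp

/-- **Differential privacy of the monotonic-valuations mechanism**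
(used in the proof of Theorem 4.2): `M_{-i}` is `ε`-differentially private
for `i`-neighbors. -/
theorem monMech_minus_dp (n : ℕ) (hn : 1 ≤ n) (B ε : ℝ) (hB : 0 < B) (hε : 0 < ε)
    (G : PMF ℤ) (hG : isGeom ε G) (i : Fin n)
    (x y : (Fin n → Bool) × (Fin n → ℝ)) (hxy : iNeighbor i x y)
    (sp : ℤ × ({j : Fin n // j ≠ i} → ℝ)) :
    (monMech n B ε G).minus i x.1 x.2 sp ≤
      ENNReal.ofReal (Real.exp ε) * (monMech n B ε G).minus i y.1 y.2 sp :=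
  monMech_minus_dp_general n B ε hε G hG i x y hxy sp
end
end

section
/- Theorem 4.2, part 3 (accuracy of the monotonic-valuations mechanism). Fix B > 0, ε > 0, γ > 0 and n ≥ 1, and let M = M_{B,ε} be the monotonic-valuations mechanism. Let (b,v) ∈ {0,1}^n × ℝ^n be the true types and let η = |{i : b_i = 1 and 2εv_i > B/n}| / n. Let v' ∈ ℝ^n be any vector of declared valuations satisfying v'_i = v_i for every i with 2εv_i ≤ B/n (i.e., the low-valuation players report truthfully; high-valuation players may declare arbitrarily). Then, with b̄ = (1/n)·Σ_i b_i, Pr[ M_out(b, v') ∉ ((b̄ − η − γ)n, (b̄ + γ)n) ] ≤ 2e^{−εγn}; that is, M is ([η + γ, γ], 2e^{−εγn})-accurate on (b, v'). -/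
open MeasureTheory
open scoped ENNReal

noncomputable section

attribute [local instance] Classical.propDecidable

/-!
Every player with `2εv_i ≤ B/n` reports truthfully and is counted, so the noiseless count
`S = #{i | b_i = 1, 2εv'_i ≤ B/n}` satisfies `b̄n - ηn ≤ S ≤ b̄n`. The output `S + X`,
`X ~ Geom(ε)`, can therefore leave `((b̄ - η - γ)n, (b̄ + γ)n)` only if `|X| ≥ γn`, and each of
the two tails of `Geom(ε)` beyond `m` has mass `e^{-εm}/(1 + e^{-ε}) ≤ e^{-εm}`.
-/

section Geometric

variable {ε : ℝ} {G : PMF ℤ}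

lemma isGeom.apply_le (hG : isGeom ε G) (hε : 0 ≤ ε) (k : ℤ) :
    G k ≤ (1 - ENNReal.ofReal (Real.exp (-ε))) * ENNReal.ofReal (Real.exp (-ε)) ^ k.natAbs := by
  set q := Real.exp (-ε)
  have hq0 : 0 ≤ q := (Real.exp_pos _).le
  have hq1 : q ≤ 1 := Real.exp_le_one_iff.2 (neg_nonpos.2 hε)
  have hpow : Real.exp (-ε * |(k : ℝ)|) = q ^ k.natAbs := by
    rw [← Real.exp_nat_mul, Nat.cast_natAbs, Int.cast_abs, mul_comm]
  rw [hG k, ← ENNReal.ofReal_one, ← ENNReal.ofReal_sub _ hq0, ← ENNReal.ofReal_pow hq0,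
    ← ENNReal.ofReal_mul (sub_nonneg.2 hq1), hpow]
  gcongr
  exact div_le_self (sub_nonneg.2 hq1) (by linarith)

lemma isGeom.toOuterMeasure_range_le (hG : isGeom ε G) (hε : 0 < ε) {g : ℕ → ℤ}
    (hg : g.Injective) (m : ℕ) (hgm : ∀ k, (g k).natAbs = m + k) :
    G.toOuterMeasure (Set.range g) ≤ ENNReal.ofReal (Real.exp (-ε)) ^ m := by
  set r := ENNReal.ofReal (Real.exp (-ε))
  have hr : r < 1 := by
    rw [ENNReal.ofReal_lt_one, Real.exp_lt_one_iff]; linarith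
  calc G.toOuterMeasure (Set.range g) = ∑' k, G (g k) := by
        rw [PMF.toOuterMeasure_apply, ← tsum_subtype, tsum_range _ hg]
    _ ≤ ∑' k : ℕ, (1 - r) * r ^ m * r ^ k := by
        refine ENNReal.tsum_le_tsum fun k => ?_
        rw [mul_assoc, ← pow_add, ← hgm]
        exact hG.apply_le hε.le (g k)
    _ = r ^ m := by
        rw [ENNReal.tsum_mul_left, ENNReal.tsum_geometric, mul_comm (1 - r), mul_assoc,
          ENNReal.mul_inv_cancel (tsub_pos_of_lt hr).ne' (by simp), mul_one]

lemma isGeom.toOuterMeasure_le_abs_le (hG : isGeom ε G) (hε : 0 < ε) (t : ℝ) :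
    G.toOuterMeasure {x : ℤ | t ≤ |(x : ℝ)|} ≤ ENNReal.ofReal (2 * Real.exp (-(ε * t))) := by
  set m := ⌈t⌉₊
  have hsub : {x : ℤ | t ≤ |(x : ℝ)|} ⊆
      Set.range (fun k : ℕ => (m + k : ℤ)) ∪ Set.range (fun k : ℕ => -(m + k : ℤ)) := by
    intro x hx
    have hmx : m ≤ x.natAbs := Nat.ceil_le.2 (by rw [Nat.cast_natAbs, Int.cast_abs]; exact hx)
    rcases le_or_gt 0 x with h | h
    · exact Or.inl ⟨(x - m).toNat, by dsimp only; omega⟩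
    · exact Or.inr ⟨(-x - m).toNat, by dsimp only; omega⟩
  have hpos := hG.toOuterMeasure_range_le hε (g := fun k : ℕ => (m + k : ℤ))
    (fun a b h => by simpa using h) m (fun k => by omega)
  have hneg := hG.toOuterMeasure_range_le hε (g := fun k : ℕ => -(m + k : ℤ))
    (fun a b h => by simpa using h) m (fun k => by omega)
  have hm : ENNReal.ofReal (Real.exp (-ε)) ^ m ≤ ENNReal.ofReal (Real.exp (-(ε * t))) := by
    rw [← ENNReal.ofReal_pow (Real.exp_pos _).le, ← Real.exp_nat_mul]
    gcongr
    nlinarith [Nat.le_ceil t]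
  calc G.toOuterMeasure {x : ℤ | t ≤ |(x : ℝ)|}
      ≤ G.toOuterMeasure (Set.range fun k : ℕ => (m + k : ℤ)) +
          G.toOuterMeasure (Set.range fun k : ℕ => -(m + k : ℤ)) :=
        (measure_mono hsub).trans (measure_union_le _ _)
    _ ≤ ENNReal.ofReal (Real.exp (-(ε * t))) + ENNReal.ofReal (Real.exp (-(ε * t))) :=
        add_le_add (hpos.trans hm) (hneg.trans hm)
    _ = ENNReal.ofReal (2 * Real.exp (-(ε * t))) := by
        rw [two_mul, ENNReal.ofReal_add (Real.exp_pos _).le (Real.exp_pos _).le]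

end Geometric

lemma bbar_mul_natCast {n : ℕ} (b : Fin n → Bool) :
    bbar b * n = (Finset.univ.filter (fun i => b i = true)).card := by
  rcases n.eq_zero_or_pos with rfl | hn
  · simp
  · rw [bbar, Finset.sum_boole, div_mul_cancel₀ _ (by positivity)]

lemma accurate_of_out_eq_map_add {n : ℕ} {M : Mech n} {a a' β t : ℝ} {b : Fin n → Bool}
    {v : Fin n → ℝ} {G : PMF ℤ} {S : ℤ} (hout : M.out b v = G.map (S + ·))
    (hlow : (bbar b - a) * n + t ≤ S) (hupp : S + t ≤ (bbar b + a') * n) (hβ : 0 ≤ β)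
    (htail : G.toOuterMeasure {x : ℤ | t ≤ |(x : ℝ)|} ≤ ENNReal.ofReal β) :
    accurate M a a' β b v := by
  refine ENNReal.toReal_le_of_le_ofReal hβ (le_trans ?_ htail)
  rw [hout, PMF.toOuterMeasure_map_apply]
  refine measure_mono fun x hx => ?_
  simp only [Set.mem_preimage, Set.mem_ofPred_eq, Int.cast_add, not_and_or, not_lt] at hx ⊢
  rcases hx with hx | hx
  · exact le_abs.2 (Or.inr (by linarith))
  · exact le_abs.2 (Or.inl (by linarith))

lemma monMech_out (n : ℕ) (B ε : ℝ) (G : PMF ℤ) (b : Fin n → Bool) (v : Fin n → ℝ) :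
    (monMech n B ε G).out b v = G.map
      (((Finset.univ.filter (fun i => b i = true ∧ 2 * ε * v i ≤ B / n)).card : ℤ) + ·) := by
  rw [Mech.out, monMech, PMF.map_comp]
  congr 1
  funext x
  simp only [Function.comp_apply, Finset.sum_boole]

lemma card_filter_true_le_of_truthful {n : ℕ} {B ε : ℝ} {b : Fin n → Bool} {v v' : Fin n → ℝ}
    (htruthful : ∀ i : Fin n, 2 * ε * v i ≤ B / n → v' i = v i) :
    (Finset.univ.filter (fun i => b i = true)).card ≤
      (Finset.univ.filter (fun i => b i = true ∧ 2 * ε * v' i ≤ B / n)).card +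
        (Finset.univ.filter (fun i => b i = true ∧ B / n < 2 * ε * v i)).card := by
  refine (Finset.card_le_card fun i hi => ?_).trans (Finset.card_union_le _ _)
  simp only [Finset.mem_filter, Finset.mem_union, Finset.mem_univ, true_and] at hi ⊢
  by_cases hlow : 2 * ε * v i ≤ B / n
  · exact Or.inl ⟨hi, (htruthful i hlow).symm ▸ hlow⟩
  · exact Or.inr ⟨hi, not_le.1 hlow⟩

theorem monMech_accurate_general (n : ℕ) (hn : 1 ≤ n) (B ε γ : ℝ)
    (hε : 0 < ε)
    (G : PMF ℤ) (hG : isGeom ε G)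
    (b : Fin n → Bool) (v v' : Fin n → ℝ)
    (htruthful : ∀ i : Fin n, 2 * ε * v i ≤ B / n → v' i = v i) :
    accurate (monMech n B ε G)
      ((((Finset.univ.filter
          (fun i : Fin n => b i = true ∧ B / n < 2 * ε * v i)).card : ℝ) / n) + γ)
      γ (2 * Real.exp (-(ε * γ * n))) b v' := by
  set C := (Finset.univ.filter (fun i : Fin n => b i = true)).card
  set H := (Finset.univ.filter (fun i : Fin n => b i = true ∧ B / n < 2 * ε * v i)).card
  set S := (Finset.univ.filter (fun i : Fin n => b i = true ∧ 2 * ε * v' i ≤ B / n)).card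
  have hC : bbar b * n = C := bbar_mul_natCast b
  have hSC : (S : ℝ) ≤ C := by
    exact_mod_cast Finset.card_le_card (Finset.monotone_filter_right _ fun _ _ => And.left)
  have hCSH : (C : ℝ) ≤ S + H := by exact_mod_cast card_filter_true_le_of_truthful htruthful
  have hHn : (H : ℝ) / n * n = H := div_mul_cancel₀ _ (Nat.cast_ne_zero.2 (by omega))
  refine accurate_of_out_eq_map_add (monMech_out n B ε G b v') ?_ ?_ (by positivity)
    (mul_assoc ε γ n ▸ hG.toOuterMeasure_le_abs_le hε (γ * n))
  · push_cast
    linarith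
  · push_cast
    linarith

/-- **Theorem 4.2, part 3 (accuracy of the monotonic-valuations mechanism).** -/
theorem monMech_accurate (n : ℕ) (hn : 1 ≤ n) (B ε γ : ℝ)
    (hB : 0 < B) (hε : 0 < ε) (hγ : 0 < γ)
    (G : PMF ℤ) (hG : isGeom ε G)
    (b : Fin n → Bool) (v v' : Fin n → ℝ)
    (htruthful : ∀ i : Fin n, 2 * ε * v i ≤ B / n → v' i = v i) :
    accurate (monMech n B ε G)
      ((((Finset.univ.filter
          (fun i : Fin n => b i = true ∧ B / n < 2 * ε * v i)).card : ℝ) / n) + γ)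
      γ (2 * Real.exp (-(ε * γ * n))) b v' :=
  monMech_accurate_general n hn B ε γ hε G hG b v v' htruthful
end
end

section
/- Theorem 5.1 (impossibility of non-trivial accuracy for all privacy valuations with monotonic privacy). Fix a number of players n ≥ 1, a mechanism M, and nonnegative privacy loss functions λ_1, …, λ_n. Suppose each λ_i respects indifference and is increasing for δ-monotonic distinguishability for some δ ≤ 1/(3n). Suppose M is individually rational; M always has finite payments, i.e., Pay_i(b,v) is finite for all (b,v) ∈ {0,1}^n × ℝ^n and all i; and M is truthful for every input (b,v) and player i with v_i = 0. Then there exists v ∈ ℝ^n such that M is not (1/2, 1/3)-accurate on both of the inputs (0^n, 0^n) and (1^n, v). -/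
/-!
Switch the players from `(0, 0)` to `(1, v)` one at a time. When player `i` flips her bit her
valuation in the current input is `0`, so by indifference and truthfulness her payment for
reporting any `w` is at most her payment `P` for reporting `0`. If the flip, done with a
valuation `w` above the threshold of "increasing for monotonic distinguishability" at level
`|P| + 1`, moved `M_out` by at least `δ`, her loss and hence, by individual rationality, her
payment at `w` would exceed `|P| + 1`. So each of the `n` flips moves `M_out` by less than
`δ ≤ 1/(3n)`, and the outputs on `(0^n, 0^n)` and `(1^n, v)` are less than `1/3` apart in total
variation, whereas accuracy on both inputs forces a distance of at least `1/3`.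
-/

open MeasureTheory
open scoped ENNReal

noncomputable section

attribute [local instance] Classical.propDecidable

open Function

namespace PMF

variable {α : Type*} (p : PMF α) (s : Set α)

lemma toOuterMeasure_add_compl : p.toOuterMeasure s + p.toOuterMeasure sᶜ = 1 := by
  rw [toOuterMeasure_apply, toOuterMeasure_apply, ← ENNReal.tsum_add]
  simp only [Set.indicator_self_add_compl_apply, p.tsum_coe]

lemma toOuterMeasure_ne_top : p.toOuterMeasure s ≠ ⊤ :=
  ne_top_of_le_ne_top ENNReal.one_ne_top (p.toOuterMeasure_add_compl s ▸ le_self_add)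

lemma toReal_toOuterMeasure_le_one : (p.toOuterMeasure s).toReal ≤ 1 :=
  (ENNReal.toReal_le_toReal (p.toOuterMeasure_ne_top s) ENNReal.one_ne_top).2
    (p.toOuterMeasure_add_compl s ▸ le_self_add) |>.trans_eq ENNReal.toReal_one

lemma toReal_toOuterMeasure_add_compl :
    (p.toOuterMeasure s).toReal + (p.toOuterMeasure sᶜ).toReal = 1 := by
  rw [← ENNReal.toReal_add (p.toOuterMeasure_ne_top s) (p.toOuterMeasure_ne_top sᶜ),
    toOuterMeasure_add_compl, ENNReal.toReal_one]

end PMF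

section TotalVariation

variable {α : Type*}

lemma abs_sub_le_tvDist (p q : PMF α) (S : Set α) :
    |(p.toOuterMeasure S).toReal - (q.toOuterMeasure S).toReal| ≤ tvDist p q := by
  refine le_ciSup (f := fun T : Set α =>
    |(p.toOuterMeasure T).toReal - (q.toOuterMeasure T).toReal|) ⟨1, ?_⟩ S
  rintro _ ⟨T, rfl⟩
  exact abs_sub_le_of_nonneg_of_le ENNReal.toReal_nonneg (p.toReal_toOuterMeasure_le_one T)
    ENNReal.toReal_nonneg (q.toReal_toOuterMeasure_le_one T)

lemma tvDist_comm (p q : PMF α) : tvDist p q = tvDist q p := by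
  simp only [tvDist, abs_sub_comm]

lemma tvDist_triangle (p q r : PMF α) : tvDist p r ≤ tvDist p q + tvDist q r :=
  ciSup_le fun S => (abs_sub_le _ _ _).trans
    (add_le_add (abs_sub_le_tvDist p q S) (abs_sub_le_tvDist q r S))

lemma one_sub_add_le_tvDist {p q : PMF α} {E F : Set α} {β γ : ℝ} (hEF : E ∪ F = Set.univ)
    (hp : (p.toOuterMeasure E).toReal ≤ β) (hq : (q.toOuterMeasure F).toReal ≤ γ) :
    1 - (β + γ) ≤ tvDist p q := by
  have hsub : Fᶜ ⊆ E := Set.compl_subset_iff_union.2 (Set.union_comm E F ▸ hEF)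
  have hpF : (p.toOuterMeasure Fᶜ).toReal ≤ β :=
    (ENNReal.toReal_mono (p.toOuterMeasure_ne_top E) (measure_mono hsub)).trans hp
  have hqF := q.toReal_toOuterMeasure_add_compl F
  calc 1 - (β + γ) ≤ (q.toOuterMeasure Fᶜ).toReal - (p.toOuterMeasure Fᶜ).toReal := by
        linarith
    _ ≤ tvDist q p := (le_abs_self _).trans (abs_sub_le_tvDist q p Fᶜ)
    _ = tvDist p q := tvDist_comm q p

end TotalVariation

section Accuracy

variable {n : ℕ}

lemma bbar_false : bbar (fun _ : Fin n => false) = 0 := by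
  simp [bbar]

lemma bbar_true (hn : n ≠ 0) : bbar (fun _ : Fin n => true) = 1 := by
  simp [bbar, hn]

lemma one_sub_add_le_tvDist_of_accurate (hn : 1 ≤ n) (M : Mech n) {a a' β c c' γ : ℝ}
    {u v : Fin n → ℝ} (hac : a' + c ≤ 1) (h0 : accurate M a a' β (fun _ => false) u)
    (h1 : accurate M c c' γ (fun _ => true) v) :
    1 - (β + γ) ≤ tvDist (M.out (fun _ => false) u) (M.out (fun _ => true) v) := by
  rw [accurate, bbar_false] at h0
  rw [accurate, bbar_true (by omega)] at h1
  refine one_sub_add_le_tvDist (Set.eq_univ_of_forall fun s => ?_) h0 h1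
  by_contra hs
  simp only [Set.mem_union, Set.mem_ofPred_eq, not_or, not_not] at hs
  nlinarith [hs.1.2, hs.2.1, n.cast_nonneg (α := ℝ)]

end Accuracy

section Mechanism

variable {n : ℕ} (M : Mech n) {i : Fin n} {lam : LossFn n i}

lemma pay_update_le_of_eq_zero (hindiff : respectsIndifference M lam) {b : Fin n → Bool}
    {v : Fin n → ℝ} (hv : v i = 0) (htruth : truthfulAt M lam b v) (w : ℝ) :
    M.pay b (update v i w) i ≤ M.pay b v i := by
  have h := htruth w
  rw [hindiff b v hv w (v i)] at h
  linarith

lemma exists_tvDist_out_update_lt {δ : ℝ} (hindiff : respectsIndifference M lam)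
    (hincr : increasingForMon M lam δ) (hIR : ∀ b v, lossOf M lam b v (v i) ≤ M.pay b v i)
    (htruth : ∀ b v, v i = 0 → truthfulAt M lam b v) {b : Fin n → Bool} {v : Fin n → ℝ}
    (hb : b i = false) (hv : v i = 0) :
    ∃ w, tvDist (M.out b v) (M.out (update b i true) (update v i w)) < δ := by
  obtain ⟨T, hT⟩ := hincr
  set b' := update b i true
  set ℓ := |M.pay b' v i| + 1
  set w := max 0 (T ℓ b' fun j => v j.1)
  refine ⟨w, lt_of_not_ge fun hge => ?_⟩
  have hothers : (fun j : {j // j ≠ i} => update v i w j.1) = fun j => v j.1 :=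
    funext fun j => update_of_ne j.2 w v
  have hdist : monDistinguishable δ M.out i b' (update v i w) := by
    refine ⟨(b, v), ⟨fun j hj => ⟨update_of_ne hj _ _, update_of_ne hj _ _⟩, ?_⟩, ?_⟩
    · refine Or.inr ⟨update_self i true b, hb, ?_⟩
      change v i ≤ update v i w i
      rw [hv, update_self]
      exact le_max_left _ _
    · rwa [tvDist_comm]
  have hloss := hT ℓ (by positivity) b' (update v i w)
    (by rw [hothers, update_self]; exact le_max_right _ _) hdist
  have hpay := pay_update_le_of_eq_zero M hindiff hv (htruth b' v hv) w
  have hIRw := hIR b' (update v i w)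
  linarith [le_abs_self (M.pay b' v i)]

end Mechanism

section Hybrid

variable {n : ℕ} {α : Type*} (f : (Fin n → Bool) → (Fin n → ℝ) → PMF α) {δ : ℝ}

def prefixBits (k : ℕ) : Fin n → Bool := fun j => decide (j.1 < k)

lemma prefixBits_zero : prefixBits 0 = fun _ : Fin n => false := by
  funext j
  simp [prefixBits]

lemma prefixBits_self (i : Fin n) : prefixBits i.1 i = false := by
  simp [prefixBits]

lemma prefixBits_of_le {k : ℕ} (hk : n ≤ k) : prefixBits k = fun _ : Fin n => true := by
  funext j
  simp [prefixBits, j.2.trans_le hk]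

lemma update_prefixBits (i : Fin n) : update (prefixBits i.1) i true = prefixBits (i.1 + 1) := by
  funext j
  rcases eq_or_ne j i with rfl | hj
  · simp [prefixBits]
  · have : j.1 ≠ i.1 := Fin.val_ne_of_ne hj
    simp only [update_of_ne hj, prefixBits, decide_eq_decide]
    omega

variable (hstep : ∀ (i : Fin n) b v, b i = false → v i = 0 →
  ∃ w, tvDist (f b v) (f (update b i true) (update v i w)) < δ)
include hstep

lemma exists_prefixBits_succ {k : ℕ} (hk : k < n) {v : Fin n → ℝ}
    (hv : ∀ j : Fin n, k ≤ j.1 → v j = 0) :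
    ∃ v', (∀ j : Fin n, k + 1 ≤ j.1 → v' j = 0) ∧
      tvDist (f (prefixBits k) v) (f (prefixBits (k + 1)) v') < δ := by
  obtain ⟨w, hw⟩ := hstep ⟨k, hk⟩ _ v (prefixBits_self ⟨k, hk⟩) (hv _ le_rfl)
  refine ⟨update v ⟨k, hk⟩ w, fun j hj => ?_, update_prefixBits ⟨k, hk⟩ ▸ hw⟩
  rw [update_of_ne fun h => by simp [h] at hj]
  exact hv j (by omega)

lemma exists_tvDist_lt_of_step (hn : 1 ≤ n) :
    ∃ v, tvDist (f (fun _ => false) fun _ => 0) (f (fun _ => true) v) < n * δ := by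
  suffices h : ∀ k, 1 ≤ k → k ≤ n → ∃ v, (∀ j : Fin n, k ≤ j.1 → v j = 0) ∧
      tvDist (f (prefixBits 0) fun _ => 0) (f (prefixBits k) v) < k * δ by
    obtain ⟨v, -, hv⟩ := h n hn le_rfl
    exact ⟨v, by rwa [prefixBits_zero, prefixBits_of_le le_rfl] at hv⟩
  intro k hk
  induction k, hk using Nat.le_induction with
  | base =>
    intro h1n
    simpa using exists_prefixBits_succ f hstep h1n fun _ _ => rfl
  | succ k _ ih =>
    intro hk
    obtain ⟨v, hv, hdist⟩ := ih (by omega)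
    obtain ⟨v', hv', hlast⟩ := exists_prefixBits_succ f hstep hk hv
    refine ⟨v', hv', ?_⟩
    push_cast
    linarith [tvDist_triangle (f (prefixBits 0) fun _ => 0) (f (prefixBits k) v)
      (f (prefixBits (k + 1)) v')]

end Hybrid

theorem monotonic_impossibility_general (n : ℕ) (hn : 1 ≤ n) (M : Mech n)
    (lam : ∀ i : Fin n, LossFn n i)
    (δ : ℝ) (hδ : δ ≤ 1 / (3 * n))
    (hindiff : ∀ i : Fin n, respectsIndifference M (lam i))
    (hincr : ∀ i : Fin n, increasingForMon M (lam i) δ)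
    (hIR : indivRational M lam)
    (htruth : ∀ (b : Fin n → Bool) (v : Fin n → ℝ) (i : Fin n), v i = 0 →
      truthfulAt M (lam i) b v) :
    ∃ v : Fin n → ℝ,
      ¬ (accurate M (1/2) (1/2) (1/3) (fun _ => false) (fun _ => 0) ∧
         accurate M (1/2) (1/2) (1/3) (fun _ => true) v) := by
  obtain ⟨v, hclose⟩ := exists_tvDist_lt_of_step M.out
    (fun i _ _ hb hv => exists_tvDist_out_update_lt M (hindiff i) (hincr i)
      (fun b v => hIR b v i) (fun b v => htruth b v i) hb hv) hn
  refine ⟨v, fun ⟨h0, h1⟩ => ?_⟩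
  have hfar := one_sub_add_le_tvDist_of_accurate hn M (by norm_num) h0 h1
  have hnδ : n * δ ≤ 1 / 3 := by
    have hn' : (0 : ℝ) < n := by exact_mod_cast hn
    calc n * δ ≤ n * (1 / (3 * n)) := by gcongr
      _ = 1 / 3 := by field_simp
  linarith

/-- **Theorem 5.1 (impossibility of non-trivial accuracy for all privacy valuations
with monotonic privacy).** -/
theorem monotonic_impossibility (n : ℕ) (hn : 1 ≤ n) (M : Mech n)
    (lam : ∀ i : Fin n, LossFn n i)
    (hnonneg : ∀ (i : Fin n) b v v'i s p, 0 ≤ lam i b v v'i s p)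
    (δ : ℝ) (hδ : δ ≤ 1 / (3 * n))
    (hindiff : ∀ i : Fin n, respectsIndifference M (lam i))
    (hincr : ∀ i : Fin n, increasingForMon M (lam i) δ)
    (hIR : indivRational M lam)
    (hfin : ∀ (b : Fin n → Bool) (v : Fin n → ℝ) (i : Fin n),
      Integrable (fun p => p i) ((M.payPMF b v).toMeasure))
    (htruth : ∀ (b : Fin n → Bool) (v : Fin n → ℝ) (i : Fin n), v i = 0 →
      truthfulAt M (lam i) b v) :
    ∃ v : Fin n → ℝ,
      ¬ (accurate M (1/2) (1/2) (1/3) (fun _ => false) (fun _ => 0) ∧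
         accurate M (1/2) (1/2) (1/3) (fun _ => true) v) :=
  monotonic_impossibility_general n hn M lam δ hδ hindiff hincr hIR htruth
end
end
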